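/- Under the hypotheses of the deterministic drift-plus-penalty bound (L(t+1) - L(t) + V·C(t) ≤ B + V·c* for all t, L ≥ 0, L(0)=0, C(t) ≥ 0), if Q : ℕ → ℝ is a nonnegative sequence with (1/2)Q(t)^2 ≤ L(t) for all t, then lim_{T→∞} Q(T)/T = 0, i.e., Q is rate stable. -/

import Mathlib

open Filter Topology

/-! Summing the drift-plus-penalty inequality and dropping the nonnegative penalty gives
`L T ≤ T (B + V c*)`, so `Q T ^ 2 ≤ 2 (B + V c*) T`: the queue grows at most like `√T`. -/

theorem le_add_mul_of_sub_succ_le {L : ℕ → ℝ} {K : ℝ} (h : ∀ t, L (t + 1) - L t ≤ K) (T : ℕ) :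
    L T ≤ L 0 + T * K := by
  induction T with
  | zero => simp
  | succ n ih =>
    push_cast
    linarith [h n]

theorem tendsto_div_natCast_zero_of_sq_le_mul {Q : ℕ → ℝ} {c : ℝ} (h : ∀ T, Q T ^ 2 ≤ c * T) :
    Tendsto (fun T : ℕ => Q T / T) atTop (𝓝 0) := by
  have hbound : Tendsto (fun T : ℕ => √(c / T)) atTop (𝓝 0) := by
    simpa using (tendsto_const_div_atTop_nhds_zero_nat c).sqrt
  refine squeeze_zero_norm' ?_ hbound
  filter_upwards [eventually_gt_atTop 0] with T hT
  have hT' : (0 : ℝ) < T := Nat.cast_pos.mpr hT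
  rw [Real.norm_eq_abs, ← Real.sqrt_sq_eq_abs]
  gcongr
  rw [div_pow, div_le_div_iff₀ (by positivity) hT']
  nlinarith [h T]

theorem queue_rate_stable_general
    (L C : ℕ → ℝ) (Q : ℕ → ℝ) (V B cstar : ℝ)
    (hL0 : L 0 = 0)
    (hC : ∀ t, 0 ≤ C t) (hV : 0 < V)
    (hdpp : ∀ t, L (t + 1) - L t + V * C t ≤ B + V * cstar)
    (hQL : ∀ t, (1 / 2) * (Q t) ^ 2 ≤ L t) :
    Filter.Tendsto (fun T : ℕ => Q T / T) Filter.atTop (nhds 0) := by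
  have hdrift : ∀ t, L (t + 1) - L t ≤ B + V * cstar := fun t =>
    by linarith [hdpp t, mul_nonneg hV.le (hC t)]
  have hL : ∀ T : ℕ, L T ≤ T * (B + V * cstar) := fun T => by
    simpa [hL0] using le_add_mul_of_sub_succ_le hdrift T
  refine tendsto_div_natCast_zero_of_sq_le_mul (c := 2 * (B + V * cstar)) fun T => ?_
  linarith [hQL T, hL T]

theorem queue_rate_stable
    (L C : ℕ → ℝ) (Q : ℕ → ℝ) (V B cstar : ℝ)
    (hL : ∀ t, 0 ≤ L t) (hL0 : L 0 = 0)
    (hC : ∀ t, 0 ≤ C t) (hV : 0 < V) (hB : 0 ≤ B)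
    (hdpp : ∀ t, L (t + 1) - L t + V * C t ≤ B + V * cstar)
    (hQ : ∀ t, 0 ≤ Q t) (hQL : ∀ t, (1 / 2) * (Q t) ^ 2 ≤ L t) :
    Filter.Tendsto (fun T : ℕ => Q T / T) Filter.atTop (nhds 0) :=
  queue_rate_stable_general L C Q V B cstar hL0 hC hV hdpp hQL
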